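/- (Global key lemma for periodic event-triggered control.) Let Assumptions 1–4' hold, suppose κ, ν and M are globally bounded on ℝ^d, γ is C¹ with inf_{v ≥ 0} γ'(v) > -∞, and fix σ̃ ∈ (σ,1) and K > 1. Define P(x,u) to hold iff W(x,u) < -σ̃·γ(V(x)) and |∇V(x)|·|F(x,u)| + |F(x,u)|² ≤ K·M(x)·|W(x,u)|. Then the function τ⁰ : ℝ^d → (0,∞) from the key lemma can be chosen globally uniformly positive, inf_{x* ∈ ℝ^d} τ⁰(x*) > 0, where τ⁰ satisfies: whenever x* ≠ 0, x̄ ∈ B(x*) and P(x̄, 𝒰(x*)) holds, there is a solution ξ : [0, τ⁰(x*)] → ℝ^d of ξ'(t) = F(ξ(t), 𝒰(x*)) with ξ(0) = x̄ satisfying W(ξ(t), 𝒰(x*)) < -σ·γ(V(ξ(t))) for all t ∈ [0, τ⁰(x*)). -/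

import Mathlib

/-!
The time `τ⁰` is a constant `T`. Extend `F(·, 𝒰 x*)` from the sublevel set `B(x*)` to a globally
Lipschitz field, with a constant depending only on the dimension and the bound on `κ`; by
Picard–Lindelöf and Grönwall its solution from `x̄` stays within `2 |F(x̄)| T` of `x̄`. While the
solution stays in `B(x̄)`, the bounds on `κ` and `ν` together with the second half of the trigger
condition bound the change of `W` by `C T |W(x̄)|` with `C` uniform. For small `T` this keeps `W`
negative on the boundary of `B(x̄)`, so the solution never leaves it, and, since `γ' ≥ -c`, the
margin between `σ̃` and `σ` absorbs both this drift and the change of `γ(V)`.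
-/

open Set Filter
open scoped InnerProductSpace

/-- The triggering predicate `P(x,u)` of the periodic event-triggered algorithm:
`W(x,u) < -σ̃·γ(V(x))` and `|∇V(x)|·|F(x,u)| + |F(x,u)|² ≤ K·M(x)·|W(x,u)|`. -/
def trigP (d m : ℕ)
    (F : EuclideanSpace ℝ (Fin d) → EuclideanSpace ℝ (Fin m) → EuclideanSpace ℝ (Fin d))
    (V : EuclideanSpace ℝ (Fin d) → ℝ) (γ : ℝ → ℝ)
    (σtil K : ℝ) (M : EuclideanSpace ℝ (Fin d) → ℝ)
    (x : EuclideanSpace ℝ (Fin d)) (u : EuclideanSpace ℝ (Fin m)) : Prop :=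
  ⟪gradient V x, F x u⟫_ℝ < -σtil * γ (V x) ∧
  ‖gradient V x‖ * ‖F x u‖ + ‖F x u‖ ^ 2 ≤ K * M x * |⟪gradient V x, F x u⟫_ℝ|

open scoped NNReal Topology

theorem gronwallBound_zero_le {K ε x : ℝ} (hK : 0 ≤ K) (hε : 0 ≤ ε) (hx : 0 ≤ x)
    (hKx : K * x ≤ 1) : gronwallBound 0 K ε x ≤ 2 * ε * x := by
  rcases hK.eq_or_lt with rfl | hK
  · rw [gronwallBound_K0]
    nlinarith
  · have hKx' : 0 ≤ K * x := mul_nonneg hK.le hx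
    have hexp : Real.exp (K * x) - 1 ≤ 2 * (K * x) := by
      have h := Real.abs_exp_sub_one_le (x := K * x) (by rwa [abs_of_nonneg hKx'])
      rw [abs_of_nonneg hKx'] at h
      exact (abs_le.1 h).2
    calc gronwallBound 0 K ε x = ε / K * (Real.exp (K * x) - 1) := by
          simp only [gronwallBound_of_K_ne_0 hK.ne', zero_mul, zero_add]
      _ ≤ ε / K * (2 * (K * x)) := by gcongr
      _ = 2 * ε * x := by field_simp

section ODE

variable {E : Type*} [NormedAddCommGroup E] [NormedSpace ℝ E] [CompleteSpace E]

theorem LipschitzWith.exists_hasDerivWithinAt_Icc_norm_sub_le {f : E → E} {L : ℝ≥0}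
    (hf : LipschitzWith L f) (x₀ : E) {T : ℝ} (hT : 0 ≤ T) (hLT : 2 * L * T ≤ 1) :
    ∃ ξ : ℝ → E, ξ 0 = x₀ ∧ ∀ t ∈ Icc 0 T,
      HasDerivWithinAt ξ (f (ξ t)) (Icc 0 T) t ∧ ‖ξ t - x₀‖ ≤ 2 * ‖f x₀‖ * T := by
  set B := ‖f x₀‖
  have hR : 0 ≤ 2 * B * T := by positivity
  have hnorm : ∀ x, ‖f x‖ ≤ L * ‖x - x₀‖ + B := fun x => by
    have := hf.norm_sub_le x x₀
    have := norm_le_insert' (f x) (f x₀)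
    linarith
  have hball : ∀ x ∈ Metric.closedBall x₀ (2 * B * T).toNNReal, ‖f x‖ ≤ (2 * B).toNNReal := by
    intro x hx
    rw [mem_closedBall_iff_norm, Real.coe_toNNReal _ hR] at hx
    rw [Real.coe_toNNReal _ (by positivity)]
    nlinarith [hnorm x, mul_le_mul_of_nonneg_left hx L.coe_nonneg,
      mul_le_mul_of_nonneg_left hLT (norm_nonneg (f x₀))]
  have hPL : IsPicardLindelof (fun _ => f) (tmin := 0) (tmax := T) ⟨0, le_rfl, hT⟩ x₀
      (2 * B * T).toNNReal 0 (2 * B).toNNReal L :=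
    IsPicardLindelof.of_time_independent hball hf.lipschitzOnWith (by
      simp [Real.coe_toNNReal _ hR, Real.coe_toNNReal _ (by positivity : 0 ≤ 2 * B), hT])
  obtain ⟨ξ, hξ0, hξ⟩ := hPL.exists_eq_forall_mem_Icc_hasDerivWithinAt₀
  have hdist : ∀ t ∈ Icc 0 T, ‖ξ t - x₀‖ ≤ gronwallBound 0 L B (t - 0) := by
    refine norm_le_gronwallBound_of_norm_deriv_right_le
      (fun t ht => ((hξ t ht).sub_const x₀).continuousWithinAt)
      (fun t ht => ((hξ t (Ico_subset_Icc_self ht)).sub_const x₀).mono_of_mem_nhdsWithin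
        (Icc_mem_nhdsGE_of_mem ht)) (by simp [hξ0]) (fun t _ => hnorm (ξ t))
  refine ⟨ξ, hξ0, fun t ht => ⟨hξ t ht, ?_⟩⟩
  calc ‖ξ t - x₀‖ ≤ gronwallBound 0 L B t := by simpa using hdist t ht
    _ ≤ 2 * B * t := gronwallBound_zero_le L.coe_nonneg (norm_nonneg _) ht.1
        (by nlinarith [ht.2, L.coe_nonneg])
    _ ≤ 2 * B * T := by gcongr; exact ht.2

end ODE

theorem le_add_mul_sub_of_neg_le_deriv {f : ℝ → ℝ} (hf : Differentiable ℝ f) {c : ℝ}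
    (hc : ∀ v, 0 ≤ v → -c ≤ deriv f v) {a b : ℝ} (ha : 0 ≤ a) (hab : a ≤ b) :
    f a ≤ f b + c * (b - a) := by
  have := (convex_Ici (0 : ℝ)).mul_sub_le_image_sub_of_le_deriv hf.continuous.continuousOn
    hf.differentiableOn (fun v hv => hc v (interior_subset hv)) a ha b (ha.trans hab) hab
  linarith

theorem eventually_mul_le_nhdsGT_zero (a : ℝ) {ε : ℝ} (hε : 0 < ε) :
    ∀ᶠ T in 𝓝[>] (0 : ℝ), a * T ≤ ε :=
  nhdsWithin_le_nhds <|
    ((continuous_const_mul a).tendsto' 0 0 (mul_zero a)).eventually (eventually_le_nhds hε)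

section InnerProduct

variable {E : Type*} [NormedAddCommGroup E] [InnerProductSpace ℝ E]

theorem abs_inner_sub_inner_le_of_norm_sub_le {g f : E → E} {x₀ x : E} {ν L T : ℝ}
    (hν : 0 ≤ ν) (hL : 0 ≤ L) (hT : 0 ≤ T)
    (hg : ‖g x - g x₀‖ ≤ ν * ‖x - x₀‖) (hf : ‖f x - f x₀‖ ≤ L * ‖x - x₀‖)
    (hx : ‖x - x₀‖ ≤ 2 * ‖f x₀‖ * T) (hLT : 2 * L * T ≤ 1) :
    |⟪g x, f x⟫_ℝ - ⟪g x₀, f x₀⟫_ℝ| ≤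
      2 * (2 * ν + L) * T * (‖g x₀‖ * ‖f x₀‖ + ‖f x₀‖ ^ 2) := by
  set B := ‖f x₀‖
  set G := ‖g x₀‖
  have hB : 0 ≤ B := norm_nonneg _
  have hG : 0 ≤ G := norm_nonneg _
  have hfx : ‖f x‖ ≤ 2 * B := by
    nlinarith [norm_le_insert' (f x) (f x₀), mul_le_mul_of_nonneg_left hx hL,
      mul_le_mul_of_nonneg_left hLT hB]
  have hsplit : ⟪g x, f x⟫_ℝ - ⟪g x₀, f x₀⟫_ℝ = ⟪g x - g x₀, f x⟫_ℝ + ⟪g x₀, f x - f x₀⟫_ℝ := by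
    rw [inner_sub_left, inner_sub_right]; ring
  calc |⟪g x, f x⟫_ℝ - ⟪g x₀, f x₀⟫_ℝ|
      ≤ ‖g x - g x₀‖ * ‖f x‖ + G * ‖f x - f x₀‖ := by
        rw [hsplit]
        exact (abs_add_le _ _).trans
          (add_le_add (abs_real_inner_le_norm _ _) (abs_real_inner_le_norm _ _))
    _ ≤ ν * (2 * B * T) * (2 * B) + G * (L * (2 * B * T)) := by
        gcongr
        · exact hg.trans (by gcongr)
        · exact hf.trans (by gcongr)
    _ ≤ 2 * (2 * ν + L) * T * (G * B + B ^ 2) := by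
        nlinarith [mul_nonneg (mul_nonneg hT hν) (mul_nonneg hG hB),
          mul_nonneg (mul_nonneg hT hL) (sq_nonneg B)]

variable [CompleteSpace E] {V : E → ℝ} {f : E → E} {ξ : ℝ → E} {T : ℝ}

theorem HasDerivWithinAt.comp_inner_gradient {v : E} {s : Set ℝ} {t : ℝ}
    (hV : DifferentiableAt ℝ V (ξ t)) (hξ : HasDerivWithinAt ξ v s t) :
    HasDerivWithinAt (V ∘ ξ) ⟪gradient V (ξ t), v⟫_ℝ s t := by
  rw [inner_gradient_left]
  exact hV.hasFDerivAt.comp_hasDerivWithinAt t hξ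

theorem le_of_inner_gradient_neg_of_eq (hV : Differentiable ℝ V)
    (hξ : ∀ t ∈ Icc 0 T, HasDerivWithinAt ξ (f (ξ t)) (Icc 0 T) t)
    (hneg : ∀ t ∈ Ico 0 T, V (ξ t) = V (ξ 0) → ⟪gradient V (ξ t), f (ξ t)⟫_ℝ < 0) :
    ∀ t ∈ Icc 0 T, V (ξ t) ≤ V (ξ 0) := by
  have hVξ : ∀ t ∈ Icc 0 T, HasDerivWithinAt (V ∘ ξ) ⟪gradient V (ξ t), f (ξ t)⟫_ℝ (Icc 0 T) t :=
    fun t ht => (hξ t ht).comp_inner_gradient (hV _)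
  exact image_le_of_deriv_right_lt_deriv_boundary (fun t ht => (hVξ t ht).continuousWithinAt)
    (fun t ht => (hVξ t (Ico_subset_Icc_self ht)).mono_of_mem_nhdsWithin
      (Icc_mem_nhdsGE_of_mem ht)) le_rfl (fun _ => hasDerivAt_const _ _) hneg

theorem abs_sub_le_of_abs_inner_gradient_le (hV : Differentiable ℝ V)
    (hξ : ∀ t ∈ Icc 0 T, HasDerivWithinAt ξ (f (ξ t)) (Icc 0 T) t) {C : ℝ}
    (hC : ∀ t ∈ Ico 0 T, |⟪gradient V (ξ t), f (ξ t)⟫_ℝ| ≤ C) :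
    ∀ t ∈ Icc 0 T, |V (ξ t) - V (ξ 0)| ≤ C * t := by
  simpa using norm_image_sub_le_of_norm_deriv_le_segment'
    (fun t ht => (hξ t ht).comp_inner_gradient (hV _)) hC

end InnerProduct

section Trajectory

variable {E : Type*} [NormedAddCommGroup E] [InnerProductSpace ℝ E] [CompleteSpace E]
  {V : E → ℝ} {f : E → E}

theorem LipschitzWith.exists_solution_sublevel_abs_inner_gradient_sub_le
    (hV : Differentiable ℝ V) {L : ℝ≥0} (hf : LipschitzWith L f) {x₀ : E} {ν Λ T : ℝ}
    (hν : 0 ≤ ν) (hT : 0 ≤ T) (hLT : 2 * L * T ≤ 1)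
    (hgrad : ∀ x, V x ≤ V x₀ → ‖gradient V x - gradient V x₀‖ ≤ ν * ‖x - x₀‖)
    (hW₀ : ⟪gradient V x₀, f x₀⟫_ℝ < 0)
    (hΛ : ‖gradient V x₀‖ * ‖f x₀‖ + ‖f x₀‖ ^ 2 ≤ Λ * |⟪gradient V x₀, f x₀⟫_ℝ|)
    (hη : 2 * (2 * ν + L) * T * Λ < 1) :
    ∃ ξ : ℝ → E, ξ 0 = x₀ ∧ ∀ t ∈ Icc 0 T,
      HasDerivWithinAt ξ (f (ξ t)) (Icc 0 T) t ∧ V (ξ t) ≤ V x₀ ∧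
      |⟪gradient V (ξ t), f (ξ t)⟫_ℝ - ⟪gradient V x₀, f x₀⟫_ℝ| ≤
        2 * (2 * ν + L) * T * Λ * |⟪gradient V x₀, f x₀⟫_ℝ| := by
  obtain ⟨ξ, hξ0, hξ⟩ := hf.exists_hasDerivWithinAt_Icc_norm_sub_le x₀ hT hLT
  have hnear : ∀ t ∈ Icc 0 T, V (ξ t) ≤ V x₀ →
      |⟪gradient V (ξ t), f (ξ t)⟫_ℝ - ⟪gradient V x₀, f x₀⟫_ℝ| ≤
        2 * (2 * ν + L) * T * Λ * |⟪gradient V x₀, f x₀⟫_ℝ| := fun t ht hVt => by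
    refine (abs_inner_sub_inner_le_of_norm_sub_le hν L.coe_nonneg hT (hgrad _ hVt)
      (hf.norm_sub_le _ _) (hξ t ht).2 hLT).trans ?_
    rw [mul_assoc _ Λ]
    gcongr
  have hsub : ∀ t ∈ Icc 0 T, V (ξ t) ≤ V (ξ 0) := by
    refine le_of_inner_gradient_neg_of_eq hV (fun t ht => (hξ t ht).1) fun t ht hVt => ?_
    rw [hξ0] at hVt
    have := (abs_le.1 (hnear t (Ico_subset_Icc_self ht) hVt.le)).2
    rw [abs_of_neg hW₀] at this
    nlinarith
  rw [hξ0] at hsub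
  exact ⟨ξ, hξ0, fun t ht => ⟨(hξ t ht).1, hsub t ht, hnear t ht (hsub t ht)⟩⟩

theorem inner_gradient_lt_neg_mul_of_abs_sub_le (hV : Differentiable ℝ V)
    (hVnn : ∀ x, 0 ≤ V x) {ξ : ℝ → E} {T : ℝ}
    (hξ : ∀ t ∈ Icc 0 T, HasDerivWithinAt ξ (f (ξ t)) (Icc 0 T) t)
    {γ : ℝ → ℝ} {cm σ σ' η : ℝ} (hγ : ∀ a b, 0 ≤ a → a ≤ b → γ a ≤ γ b + cm * (b - a))
    (hcm : 0 ≤ cm) (hσ : 0 < σ) (hσ' : 0 < σ')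
    (hW₀neg : ⟪gradient V (ξ 0), f (ξ 0)⟫_ℝ < 0)
    (hW₀ : ⟪gradient V (ξ 0), f (ξ 0)⟫_ℝ < -σ' * γ (V (ξ 0)))
    (hsub : ∀ t ∈ Icc 0 T, V (ξ t) ≤ V (ξ 0))
    (hnear : ∀ t ∈ Icc 0 T, |⟪gradient V (ξ t), f (ξ t)⟫_ℝ - ⟪gradient V (ξ 0), f (ξ 0)⟫_ℝ| ≤
      η * |⟪gradient V (ξ 0), f (ξ 0)⟫_ℝ|)
    (hη : η + 2 * σ * cm * T ≤ 1 - σ / σ') :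
    ∀ t ∈ Ico 0 T, ⟪gradient V (ξ t), f (ξ t)⟫_ℝ < -σ * γ (V (ξ t)) := by
  set A := -⟪gradient V (ξ 0), f (ξ 0)⟫_ℝ with hA
  have hApos : 0 < A := by linarith
  rw [abs_of_neg hW₀neg, ← hA] at hnear
  intro t ht
  have hT : 0 ≤ T := ht.1.trans ht.2.le
  have hη1 : η ≤ 1 := by
    have : 0 < σ / σ' := div_pos hσ hσ'
    nlinarith [mul_nonneg (mul_nonneg hσ.le hcm) hT]
  have hdrop : ∀ t ∈ Icc 0 T, |V (ξ t) - V (ξ 0)| ≤ 2 * A * t := by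
    refine abs_sub_le_of_abs_inner_gradient_le hV hξ fun t ht => ?_
    have := abs_le.1 (hnear t (Ico_subset_Icc_self ht))
    rw [abs_le]; constructor <;> nlinarith
  have ht' := Ico_subset_Icc_self ht
  have hWt := (abs_le.1 (hnear t ht')).2
  have hVt := (abs_le.1 (hdrop t ht')).1
  have hγt := hγ _ _ (hVnn _) (hsub t ht')
  have hσγ : σ * γ (V (ξ 0)) < σ / σ' * A := by
    rw [div_mul_eq_mul_div, lt_div_iff₀ hσ']
    nlinarith
  have hσcm : 0 ≤ σ * cm := mul_nonneg hσ.le hcm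
  nlinarith [mul_le_mul_of_nonneg_left hγt hσ.le, mul_le_mul_of_nonneg_left hVt hσcm,
    mul_le_mul_of_nonneg_left ht.2.le (mul_nonneg hσcm hApos.le),
    mul_le_mul_of_nonneg_right hη hApos.le]

end Trajectory

theorem exists_solution_inner_gradient_lt_of_trigger {E : Type*} [NormedAddCommGroup E]
    [InnerProductSpace ℝ E] [FiniteDimensional ℝ E] {V : E → ℝ} {F : E → E} {γ : ℝ → ℝ}
    {c : ℝ} {κ : ℝ≥0} {ν Λ cm σ σ' T : ℝ} (hV : Differentiable ℝ V) (hVnn : ∀ x, 0 ≤ V x)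
    (hγ : ∀ a b, 0 ≤ a → a ≤ b → γ a ≤ γ b + cm * (b - a))
    (hF : ∀ x y, V x ≤ c → V y ≤ c → ‖F x - F y‖ ≤ κ * ‖x - y‖)
    (hgrad : ∀ x y, V x ≤ c → V y ≤ c → ‖gradient V x - gradient V y‖ ≤ ν * ‖x - y‖)
    {x₀ : E} (hx₀ : V x₀ ≤ c) (hγ₀ : 0 ≤ γ (V x₀))
    (hW₀ : ⟪gradient V x₀, F x₀⟫_ℝ < -σ' * γ (V x₀))
    (hΛ : ‖gradient V x₀‖ * ‖F x₀‖ + ‖F x₀‖ ^ 2 ≤ Λ * |⟪gradient V x₀, F x₀⟫_ℝ|)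
    (hν : 0 ≤ ν) (hcm : 0 ≤ cm) (hσ : 0 < σ) (hσσ' : σ < σ') (hT : 0 ≤ T)
    (hLT : 2 * ((lipschitzExtensionConstant E * κ : ℝ≥0) : ℝ) * T ≤ 1)
    (hη : (2 * (2 * ν + ((lipschitzExtensionConstant E * κ : ℝ≥0) : ℝ)) * Λ + 2 * σ * cm) * T ≤
      1 - σ / σ') :
    ∃ ξ : ℝ → E, ξ 0 = x₀ ∧
      (∀ t ∈ Icc 0 T, HasDerivWithinAt ξ (F (ξ t)) (Icc 0 T) t) ∧
      ∀ t ∈ Ico 0 T, ⟪gradient V (ξ t), F (ξ t)⟫_ℝ < -σ * γ (V (ξ t)) := by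
  have hσ' : 0 < σ' := hσ.trans hσσ'
  have hW₀neg : ⟪gradient V x₀, F x₀⟫_ℝ < 0 := hW₀.trans_le (by nlinarith)
  have hFlip : LipschitzOnWith κ F {x | V x ≤ c} := LipschitzOnWith.of_dist_le_mul
    fun x hx y hy => by simpa only [dist_eq_norm] using hF x y hx hy
  obtain ⟨f, hf, hfF⟩ := hFlip.extend_finite_dimension
  have hfx₀ : f x₀ = F x₀ := (hfF hx₀).symm
  rw [← hfx₀] at hW₀ hΛ hW₀neg
  obtain ⟨ξ, hξ0, hξ⟩ := hf.exists_solution_sublevel_abs_inner_gradient_sub_le hV hν hT hLT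
    (fun x hx => hgrad x x₀ (hx.trans hx₀) hx₀) hW₀neg hΛ (by
      have : 0 < σ / σ' := div_pos hσ hσ'
      nlinarith [mul_nonneg (mul_nonneg hσ.le hcm) hT])
  have hfFξ : ∀ t ∈ Icc 0 T, f (ξ t) = F (ξ t) := fun t ht => (hfF ((hξ t ht).2.1.trans hx₀)).symm
  subst hξ0
  refine ⟨ξ, rfl, fun t ht => hfFξ t ht ▸ (hξ t ht).1, fun t ht => ?_⟩
  rw [← hfFξ t (Ico_subset_Icc_self ht)]
  exact inner_gradient_lt_neg_mul_of_abs_sub_le hV hVnn (fun t ht => (hξ t ht).1) hγ hcm hσ hσ'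
    hW₀neg hW₀ (fun t ht => (hξ t ht).2.1) (fun t ht => (hξ t ht).2.2) (by linarith) t ht

theorem statement9_general
    (d m : ℕ)
    (F : EuclideanSpace ℝ (Fin d) → EuclideanSpace ℝ (Fin m) → EuclideanSpace ℝ (Fin d))
    (𝒰 : EuclideanSpace ℝ (Fin d) → EuclideanSpace ℝ (Fin m))
    (V : EuclideanSpace ℝ (Fin d) → ℝ) (γ : ℝ → ℝ) (σ : ℝ)
    (hσ0 : 0 < σ)
    (hγc : Continuous γ) (hγpos : ∀ v : ℝ, 0 < v → 0 < γ v)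
    (hV : ContDiff ℝ 1 V) (hV0 : V 0 = 0) (hVpos : ∀ x, x ≠ 0 → 0 < V x)
    -- Assumption 2, with `κ` globally bounded
    (κ : EuclideanSpace ℝ (Fin d) → ℝ)
    (hκlip : ∀ xs x1 x2 : EuclideanSpace ℝ (Fin d), V x1 ≤ V xs → V x2 ≤ V xs →
      ‖F x1 (𝒰 xs) - F x2 (𝒰 xs)‖ ≤ κ xs * ‖x1 - x2‖)
    (hκglob : ∃ C : ℝ, ∀ x, κ x ≤ C)
    -- Assumption 3, with `ν` globally bounded
    (ν : EuclideanSpace ℝ (Fin d) → ℝ)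
    (hνlip : ∀ xs x1 x2 : EuclideanSpace ℝ (Fin d), V x1 ≤ V xs → V x2 ≤ V xs →
      ‖gradient V x1 - gradient V x2‖ ≤ ν xs * ‖x1 - x2‖)
    (hνglob : ∃ C : ℝ, ∀ x, ν x ≤ C)
    -- Assumption 4', with `M` globally bounded
    (M : EuclideanSpace ℝ (Fin d) → ℝ)
    (hMglob : ∃ C : ℝ, ∀ x, M x ≤ C)
    -- `γ` is `C¹` with derivative bounded below on `[0,∞)`
    (hγ1 : ContDiff ℝ 1 γ)
    (hγ' : ∃ c : ℝ, ∀ v : ℝ, 0 ≤ v → c ≤ deriv γ v)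
    -- parameters of the periodic event-triggered algorithm
    (σtil K : ℝ) (hσtil1 : σ < σtil) (hK : 1 < K) :
    ∃ τ0 : EuclideanSpace ℝ (Fin d) → ℝ,
      (∀ x, 0 < τ0 x) ∧
      (∃ ε > (0 : ℝ), ∀ x : EuclideanSpace ℝ (Fin d), ε ≤ τ0 x) ∧
      (∀ xs : EuclideanSpace ℝ (Fin d), xs ≠ 0 →
        ∀ xbar : EuclideanSpace ℝ (Fin d), V xbar ≤ V xs →
          trigP d m F V γ σtil K M xbar (𝒰 xs) →
          ∃ ξ : ℝ → EuclideanSpace ℝ (Fin d), ξ 0 = xbar ∧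
            (∀ t ∈ Icc (0 : ℝ) (τ0 xs),
              HasDerivWithinAt ξ (F (ξ t) (𝒰 xs)) (Icc (0 : ℝ) (τ0 xs)) t) ∧
            (∀ t ∈ Ico (0 : ℝ) (τ0 xs),
              ⟪gradient V (ξ t), F (ξ t) (𝒰 xs)⟫_ℝ < -σ * γ (V (ξ t)))) := by
  obtain ⟨Cκ, hCκ⟩ := hκglob
  obtain ⟨Cν, hCν⟩ := hνglob
  obtain ⟨CM, hCM⟩ := hMglob
  obtain ⟨c, hc⟩ := hγ'
  have hK0 : 0 ≤ K := zero_le_one.trans hK.le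
  have hVnn : ∀ x, 0 ≤ V x := fun x => by
    rcases eq_or_ne x 0 with rfl | hx
    exacts [hV0.ge, (hVpos x hx).le]
  have hγnn : ∀ v, 0 ≤ v → 0 ≤ γ v := fun v hv =>
    closure_minimal (fun w (hw : w ∈ Ioi 0) => (hγpos w hw).le)
      (isClosed_le continuous_const hγc) (by rwa [closure_Ioi])
  have hγcmp : ∀ a b, 0 ≤ a → a ≤ b → γ a ≤ γ b + max (-c) 0 * (b - a) := fun a b =>
    le_add_mul_sub_of_neg_le_deriv (hγ1.differentiable one_ne_zero)
      fun v hv => by linarith [le_max_left (-c) 0, hc v hv]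
  set L := lipschitzExtensionConstant (EuclideanSpace ℝ (Fin d)) * Cκ.toNNReal
  have hgap : 0 < 1 - σ / σtil := sub_pos.2 ((div_lt_one (hσ0.trans hσtil1)).2 hσtil1)
  obtain ⟨T, ⟨hLT, hη⟩, hT⟩ := (((eventually_mul_le_nhdsGT_zero (2 * L) one_pos).and
    (eventually_mul_le_nhdsGT_zero (2 * (2 * max Cν 0 + L) * (K * CM) + 2 * σ * max (-c) 0)
      hgap)).and self_mem_nhdsWithin).exists
  refine ⟨fun _ => T, fun _ => hT, ⟨T, hT, fun _ => le_rfl⟩, fun xs _ xbar hxbar hP => ?_⟩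
  refine exists_solution_inner_gradient_lt_of_trigger (F := fun x => F x (𝒰 xs)) (c := V xs)
    (hV.differentiable one_ne_zero) hVnn
    hγcmp (fun x y hx hy => ?_) (fun x y hx hy => ?_) hxbar (hγnn _ (hVnn _)) hP.1
    (hP.2.trans ?_) (le_max_right _ _) (le_max_right _ _) hσ0 hσtil1 hT.le hLT hη
  · exact (hκlip xs x y hx hy).trans (by gcongr; exact (hCκ xs).trans (Real.le_coe_toNNReal _))
  · exact (hνlip xs x y hx hy).trans (by gcongr; exact (hCν xs).trans (le_max_left _ _))
  · exact mul_le_mul_of_nonneg_right (mul_le_mul_of_nonneg_left (hCM xbar) hK0) (abs_nonneg _)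

/-- Global key lemma for periodic event-triggered control.
Under Assumptions 1–4' with `κ`, `ν`, `M` globally bounded, `γ ∈ C¹` with
`inf_{v≥0} γ'(v) > -∞`, `σ̃ ∈ (σ,1)` and `K > 1`, the function `τ⁰` of the key lemma can be
chosen globally uniformly positive. -/
theorem statement9
    (d m : ℕ)
    (F : EuclideanSpace ℝ (Fin d) → EuclideanSpace ℝ (Fin m) → EuclideanSpace ℝ (Fin d))
    (U : Set (EuclideanSpace ℝ (Fin m)))
    (𝒰 : EuclideanSpace ℝ (Fin d) → EuclideanSpace ℝ (Fin m))
    (V : EuclideanSpace ℝ (Fin d) → ℝ) (γ : ℝ → ℝ) (σ : ℝ)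
    (hσ0 : 0 < σ) (hσ1 : σ < 1)
    (hγc : Continuous γ) (hγpos : ∀ v : ℝ, 0 < v → 0 < γ v)
    (hV : ContDiff ℝ 1 V) (hV0 : V 0 = 0) (hVpos : ∀ x, x ≠ 0 → 0 < V x)
    (hVrad : ∀ c : ℝ, ∃ R : ℝ, ∀ x : EuclideanSpace ℝ (Fin d), R ≤ ‖x‖ → c ≤ V x)
    (h𝒰U : ∀ x, 𝒰 x ∈ U)
    (hfeed : ∀ x, x ≠ 0 → ⟪gradient V x, F x (𝒰 x)⟫_ℝ ≤ -γ (V x))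
    -- Assumption 1
    (hF : ∀ u ∈ U, LocallyLipschitz (fun x => F x u))
    -- Assumption 2, with `κ` globally bounded
    (κ : EuclideanSpace ℝ (Fin d) → ℝ)
    (hκlip : ∀ xs x1 x2 : EuclideanSpace ℝ (Fin d), V x1 ≤ V xs → V x2 ≤ V xs →
      ‖F x1 (𝒰 xs) - F x2 (𝒰 xs)‖ ≤ κ xs * ‖x1 - x2‖)
    (hκglob : ∃ C : ℝ, ∀ x, κ x ≤ C)
    -- Assumption 3, with `ν` globally bounded
    (hgradlip : LocallyLipschitz (gradient V))
    (ν : EuclideanSpace ℝ (Fin d) → ℝ)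
    (hνlip : ∀ xs x1 x2 : EuclideanSpace ℝ (Fin d), V x1 ≤ V xs → V x2 ≤ V xs →
      ‖gradient V x1 - gradient V x2‖ ≤ ν xs * ‖x1 - x2‖)
    (hνglob : ∃ C : ℝ, ∀ x, ν x ≤ C)
    -- Assumption 4', with `M` globally bounded
    (M : EuclideanSpace ℝ (Fin d) → ℝ) (hMpos : ∀ x, 0 < M x)
    (hMglob : ∃ C : ℝ, ∀ x, M x ≤ C)
    (hMineq : ∀ x, ‖gradient V x‖ * ‖F x (𝒰 x)‖ + ‖F x (𝒰 x)‖ ^ 2 ≤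
      M x * |⟪gradient V x, F x (𝒰 x)⟫_ℝ|)
    -- `γ` is `C¹` with derivative bounded below on `[0,∞)`
    (hγ1 : ContDiff ℝ 1 γ)
    (hγ' : ∃ c : ℝ, ∀ v : ℝ, 0 ≤ v → c ≤ deriv γ v)
    -- parameters of the periodic event-triggered algorithm
    (σtil K : ℝ) (hσtil1 : σ < σtil) (hσtil2 : σtil < 1) (hK : 1 < K) :
    ∃ τ0 : EuclideanSpace ℝ (Fin d) → ℝ,
      (∀ x, 0 < τ0 x) ∧
      (∃ ε > (0 : ℝ), ∀ x : EuclideanSpace ℝ (Fin d), ε ≤ τ0 x) ∧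
      (∀ xs : EuclideanSpace ℝ (Fin d), xs ≠ 0 →
        ∀ xbar : EuclideanSpace ℝ (Fin d), V xbar ≤ V xs →
          trigP d m F V γ σtil K M xbar (𝒰 xs) →
          ∃ ξ : ℝ → EuclideanSpace ℝ (Fin d), ξ 0 = xbar ∧
            (∀ t ∈ Icc (0 : ℝ) (τ0 xs),
              HasDerivWithinAt ξ (F (ξ t) (𝒰 xs)) (Icc (0 : ℝ) (τ0 xs)) t) ∧
            (∀ t ∈ Ico (0 : ℝ) (τ0 xs),
              ⟪gradient V (ξ t), F (ξ t) (𝒰 xs)⟫_ℝ < -σ * γ (V (ξ t)))) :=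
  statement9_general d m F 𝒰 V γ σ hσ0 hγc hγpos hV hV0 hVpos κ hκlip hκglob ν hνlip hνglob M hMglob
    hγ1 hγ' σtil K hσtil1 hK
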